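/- For the quartic curve F(X,Y,Z) = Y^3(X+aZ) + Y^2(bXZ+cZ^2) + Y(dX^2Z+eXZ^2) + X^3Z + fX^2Z^2 + XZ^3 specialized to the C_3-family case, i.e., for curves with automorphism group C_3 given by y^3 = x(x-1)(x-s)(x-t), the Dixmier invariants satisfy I_3 = 0 and I_6 = 0. -/
import Mathlib


/-- The ternary quartic with standard weighted coefficients `a₁, …, a₁₅`
(0-indexed): `g = a₁x⁴ + 4a₂x³y + 6a₃x²y² + 4a₄xy³ + a₅y⁴ + 4a₆x³z + 12a₇x²yz
+ 12a₈xy²z + 4a₉y³z + 6a₁₀x²z² + 12a₁₁xyz² + 6a₁₂y²z² + 4a₁₃xz³ + 4a₁₄yz³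
+ a₁₅z⁴`, in variables `x = X 0`, `y = X 1`, `z = X 2`. -/
noncomputable def quarticOf (a : Fin 15 → ℂ) : MvPolynomial (Fin 3) ℂ :=
  let x : MvPolynomial (Fin 3) ℂ := MvPolynomial.X 0
  let y : MvPolynomial (Fin 3) ℂ := MvPolynomial.X 1
  let z : MvPolynomial (Fin 3) ℂ := MvPolynomial.X 2
  MvPolynomial.C (a 0) * x ^ 4 + MvPolynomial.C (4 * a 1) * x ^ 3 * y
    + MvPolynomial.C (6 * a 2) * x ^ 2 * y ^ 2 + MvPolynomial.C (4 * a 3) * x * y ^ 3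
    + MvPolynomial.C (a 4) * y ^ 4 + MvPolynomial.C (4 * a 5) * x ^ 3 * z
    + MvPolynomial.C (12 * a 6) * x ^ 2 * y * z + MvPolynomial.C (12 * a 7) * x * y ^ 2 * z
    + MvPolynomial.C (4 * a 8) * y ^ 3 * z + MvPolynomial.C (6 * a 9) * x ^ 2 * z ^ 2
    + MvPolynomial.C (12 * a 10) * x * y * z ^ 2 + MvPolynomial.C (6 * a 11) * y ^ 2 * z ^ 2
    + MvPolynomial.C (4 * a 12) * x * z ^ 3 + MvPolynomial.C (4 * a 13) * y * z ^ 3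
    + MvPolynomial.C (a 14) * z ^ 4

/-- The symmetric 6×6 Dixmier matrix of the quartic. -/
noncomputable def dixA (a : Fin 15 → ℂ) : Matrix (Fin 6) (Fin 6) ℂ :=
  !![a 0, a 2, a 9, a 6, a 5, a 1;
     a 2, a 4, a 11, a 8, a 7, a 3;
     a 9, a 11, a 14, a 13, a 12, a 10;
     a 6, a 8, a 13, a 11, a 10, a 7;
     a 5, a 7, a 12, a 10, a 9, a 6;
     a 1, a 3, a 10, a 7, a 6, a 2]

/-- The Dixmier invariant `I₆ = det A`. -/
noncomputable def dixI6 (a : Fin 15 → ℂ) : ℂ := (dixA a).det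

/-- The Dixmier invariant `I₃`, the (unique up to scale) degree-3 invariant of
ternary quartics, normalized so that the coefficient of `a₁a₅a₁₅` is 1. -/
noncomputable def dixI3 (a : Fin 15 → ℂ) : ℂ :=
  a 0 * a 4 * a 14
    + 3 * (a 0 * (a 11) ^ 2 + a 4 * (a 9) ^ 2 + (a 2) ^ 2 * a 14)
    + 4 * (a 1 * a 8 * a 12 + a 3 * a 5 * a 13)
    - 4 * (a 0 * a 8 * a 13 + a 4 * a 5 * a 12 + a 1 * a 3 * a 14)
    + 6 * (a 2 * a 9 * a 11)
    + 12 * (a 2 * (a 10) ^ 2 + (a 6) ^ 2 * a 11 + (a 7) ^ 2 * a 9)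
    + 12 * (a 1 * a 7 * a 13 + a 3 * a 6 * a 12 + a 5 * a 8 * a 10)
    - 12 * (a 2 * a 6 * a 13 + a 2 * a 7 * a 12 + a 1 * a 10 * a 11
      + a 3 * a 9 * a 10 + a 5 * a 7 * a 11 + a 6 * a 8 * a 9
      + a 6 * a 7 * a 10)

lemma Xm (i : Fin 3) : (MvPolynomial.X i : MvPolynomial (Fin 3) ℂ) = MvPolynomial.monomial (Finsupp.single i 1) 1 := rfl

set_option maxHeartbeats 2000000 in
open MvPolynomial in
/-- For the C₃-family of genus 3 curves `y³ = x(x-1)(x-s)(x-t)` (homogenized to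
the plane quartic `y³z = x(x-z)(x-sz)(x-tz)`), the Dixmier invariants satisfy
`I₃ = 0` and `I₆ = 0`. -/
theorem stmt16 (s t : ℂ) (a : Fin 15 → ℂ)
    (h : quarticOf a =
      (X 1 : MvPolynomial (Fin 3) ℂ) ^ 3 * X 2
        - X 0 * (X 0 - X 2) * (X 0 - C s * X 2) * (X 0 - C t * X 2)) :
    dixI3 a = 0 ∧ dixI6 a = 0 := by
  have h1 : a 1 = 0 := by
    have := congrArg (coeff (Finsupp.single 0 3 + Finsupp.single 1 1)) h
    simp [quarticOf, Xm, monomial_pow, monomial_mul, C_mul_monomial, coeff_monomial,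
      mul_assoc, coeff_C_mul, sub_mul, mul_sub, Finsupp.ext_iff, Fin.forall_fin_succ] at this
    exact this
  have h2 : a 2 = 0 := by
    have := congrArg (coeff (Finsupp.single 0 2 + Finsupp.single 1 2)) h
    simp [quarticOf, Xm, monomial_pow, monomial_mul, C_mul_monomial, coeff_monomial,
      mul_assoc, coeff_C_mul, sub_mul, mul_sub, Finsupp.ext_iff, Fin.forall_fin_succ] at this
    exact this
  have h3 : a 3 = 0 := by
    have := congrArg (coeff (Finsupp.single 0 1 + Finsupp.single 1 3)) h
    simp [quarticOf, Xm, monomial_pow, monomial_mul, C_mul_monomial, coeff_monomial,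
      mul_assoc, coeff_C_mul, sub_mul, mul_sub, Finsupp.ext_iff, Fin.forall_fin_succ] at this
    exact this
  have h4 : a 4 = 0 := by
    have := congrArg (coeff (Finsupp.single 1 4)) h
    simp [quarticOf, Xm, monomial_pow, monomial_mul, C_mul_monomial, coeff_monomial,
      mul_assoc, coeff_C_mul, sub_mul, mul_sub, Finsupp.ext_iff, Fin.forall_fin_succ] at this
    exact this
  have h6 : a 6 = 0 := by
    have := congrArg (coeff (Finsupp.single 0 2 + Finsupp.single 1 1 + Finsupp.single 2 1)) h
    simp [quarticOf, Xm, monomial_pow, monomial_mul, C_mul_monomial, coeff_monomial,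
      mul_assoc, coeff_C_mul, sub_mul, mul_sub, Finsupp.ext_iff, Fin.forall_fin_succ] at this
    exact this
  have h7 : a 7 = 0 := by
    have := congrArg (coeff (Finsupp.single 0 1 + Finsupp.single 1 2 + Finsupp.single 2 1)) h
    simp [quarticOf, Xm, monomial_pow, monomial_mul, C_mul_monomial, coeff_monomial,
      mul_assoc, coeff_C_mul, sub_mul, mul_sub, Finsupp.ext_iff, Fin.forall_fin_succ] at this
    exact this
  have h10 : a 10 = 0 := by
    have := congrArg (coeff (Finsupp.single 0 1 + Finsupp.single 1 1 + Finsupp.single 2 2)) h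
    simp [quarticOf, Xm, monomial_pow, monomial_mul, C_mul_monomial, coeff_monomial,
      mul_assoc, coeff_C_mul, sub_mul, mul_sub, Finsupp.ext_iff, Fin.forall_fin_succ] at this
    exact this
  have h11 : a 11 = 0 := by
    have := congrArg (coeff (Finsupp.single 1 2 + Finsupp.single 2 2)) h
    simp [quarticOf, Xm, monomial_pow, monomial_mul, C_mul_monomial, coeff_monomial,
      mul_assoc, coeff_C_mul, sub_mul, mul_sub, Finsupp.ext_iff, Fin.forall_fin_succ] at this
    exact this
  have h13 : a 13 = 0 := by
    have := congrArg (coeff (Finsupp.single 1 1 + Finsupp.single 2 3)) h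
    simp [quarticOf, Xm, monomial_pow, monomial_mul, C_mul_monomial, coeff_monomial,
      mul_assoc, coeff_C_mul, sub_mul, mul_sub, Finsupp.ext_iff, Fin.forall_fin_succ] at this
    exact this
  constructor
  · simp only [dixI3, h1, h2, h3, h4, h6, h7, h10, h11, h13]
    ring
  · refine Matrix.det_eq_zero_of_row_eq_zero 5 fun j => ?_
    have e : dixA a 5 j = ![a 1, a 3, a 10, a 7, a 6, a 2] j := rfl
    rw [e, h1, h2, h3, h6, h7, h10]
    fin_cases j <;> rfl
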